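/- Completeness of Bethe Ansatz vectors: let S be a finite linearly ordered set, K_1 a finite linearly ordered set, and φ_k, ψ_k : S → ℂ for k ∈ K_1 satisfying completeness Σ_{k ∈ K_1} φ_k(y) ψ_k(y')* = δ_{y,y'} for all y, y' ∈ S. Then for all strictly increasing N-tuples y, y' ∈ U(N), Σ_{k ∈ K_N} Φ_k(y) Ψ_k(y')* = δ_{y,y'}, where U(N) is the set of strictly increasing N-tuples from S and K_N is the set of strictly increasing N-tuples from K_1. -/
import Mathlib


open Finset BigOperators
open scoped Classical

noncomputable section

/-- The odd sites of the strip: `{y : 1 ≤ y ≤ L, y odd}`. -/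
def SetO (L : ℤ) : Finset ℤ := (Finset.Icc 1 L).filter (fun y => Odd y)

/-- The even sites of the strip: `{y : 0 ≤ y ≤ L, y even}`. -/
def SetE (L : ℤ) : Finset ℤ := (Finset.Icc 0 L).filter (fun y => Even y)

/-- Parity-indexed site sets: `true ↦ odd`, `false ↦ even`. -/
def Sp (L : ℤ) : Bool → Finset ℤ := fun p => if p then SetO L else SetE L

/-- Strictly increasing `N`-tuples with entries in `S`. -/
def UU {α : Type*} [LinearOrder α] (S : Finset α) (N : ℕ) : Finset (Fin N → α) :=
  (Fintype.piFinset (fun _ => S)).filter (fun y => ∀ i j : Fin N, i < j → y i < y j)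

/-- One-step transfer matrix entry: `w y y'` when `|y - y'| = 1`, and `0` otherwise. -/
def T1 (w : ℤ → ℤ → ℂ) (y y' : ℤ) : ℂ := if |y - y'| = 1 then w y y' else 0

/-- `N`-walk transfer matrix entry: product of one-step entries. -/
def TN (w : ℤ → ℤ → ℂ) {N : ℕ} (y y' : Fin N → ℤ) : ℂ := ∏ i, T1 w (y i) (y' i)

/-- Powers of a matrix indexed by a finite set `S`. -/
def matPow {α : Type*} [DecidableEq α] (S : Finset α) (M : α → α → ℂ) : ℕ → α → α → ℂ
  | 0 => fun y y' => if y = y' then 1 else 0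
  | r + 1 => fun y y' => ∑ z ∈ S, matPow S M r y z * M z y'

/-- Weight of a family of `N` walks of length `t`. -/
def walkWeight (w : ℤ → ℤ → ℂ) (v : ℤ → ℂ) {N t : ℕ} (y : Fin N → Fin (t + 1) → ℤ) : ℂ :=
  (∏ j, v (y j 0)) * ∏ m : Fin t, ∏ j, w (y j m.castSucc) (y j m.succ)

/-- The constraints on families of non-intersecting walks in the strip `0 ≤ y ≤ L`. -/
def stripCond (L : ℤ) {N t : ℕ} (yi yf : Fin N → ℤ) (y : Fin N → Fin (t + 1) → ℤ) : Prop :=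
  (∀ j, y j 0 = yi j) ∧ (∀ j, y j (Fin.last t) = yf j) ∧
    (∀ j m, 0 ≤ y j m ∧ y j m ≤ L) ∧
    (∀ j, ∀ m : Fin t, y j m.succ = y j m.castSucc + 1 ∨ y j m.succ = y j m.castSucc - 1) ∧
    (∀ m, ∀ i j : Fin N, i < j → y i m < y j m)

/-- The `N`-walk strip generating function `Z^N_t(y^i → y^f)`. -/
def Zgen (L : ℤ) (w : ℤ → ℤ → ℂ) (v : ℤ → ℂ) (N t : ℕ) (yi yf : Fin N → ℤ) : ℂ :=
  ∑ y ∈ (Fintype.piFinset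
      (fun _ : Fin N => Fintype.piFinset (fun _ : Fin (t + 1) => Finset.Icc 0 L))).filter
        (stripCond L yi yf), walkWeight w v y

/-- The constraints on families of non-intersecting walks with a single wall `y ≥ 0`. -/
def barCond {N t : ℕ} (yi yf : Fin N → ℤ) (y : Fin N → Fin (t + 1) → ℤ) : Prop :=
  (∀ j, y j 0 = yi j) ∧ (∀ j, y j (Fin.last t) = yf j) ∧
    (∀ j m, 0 ≤ y j m) ∧
    (∀ j, ∀ m : Fin t, y j m.succ = y j m.castSucc + 1 ∨ y j m.succ = y j m.castSucc - 1) ∧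
    (∀ m, ∀ i j : Fin N, i < j → y i m < y j m)

/-- The one-wall `N`-walk generating function `Z̄^N_t(y^i → y^f)`. -/
def Zbar (w : ℤ → ℤ → ℂ) (v : ℤ → ℂ) (N t : ℕ) (yi yf : Fin N → ℤ) : ℂ :=
  ∑ᶠ (y : Fin N → Fin (t + 1) → ℤ) (_ : barCond yi yf y), walkWeight w v y

/-- The Bethe Ansatz determinant built from a family of one-walk vectors. -/
def BA {K X : Type*} {N : ℕ} (φ : K → X → ℂ) (k : Fin N → K) (y : Fin N → X) : ℂ :=
  ∑ σ : Equiv.Perm (Fin N), ((Equiv.Perm.sign σ : ℤ) : ℂ) * ∏ a, φ (k (σ a)) (y a)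

end


section BetheAux

open Equiv

lemma BA_eq_det {K X : Type*} {N : ℕ} (φ : K → X → ℂ) (k : Fin N → K) (y : Fin N → X) :
    BA φ k y = Matrix.det (Matrix.of fun a b => φ (k a) (y b)) := by
  rw [Matrix.det_apply]
  simp only [BA, Matrix.of_apply, Units.smul_def, zsmul_eq_mul]

lemma BA_comp_perm {K X : Type*} {N : ℕ} (φ : K → X → ℂ) (k : Fin N → K)
    (σ : Equiv.Perm (Fin N)) (y : Fin N → X) :
    BA φ (k ∘ σ) y = ((Equiv.Perm.sign σ : ℤ) : ℂ) * BA φ k y := by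
  rw [BA_eq_det, BA_eq_det]
  have : (Matrix.of fun a b => φ ((k ∘ σ) a) (y b)) =
      (Matrix.of fun a b => φ (k a) (y b)).submatrix σ id := rfl
  rw [this, Matrix.det_permute]

lemma BA_eq_zero {K X : Type*} {N : ℕ} (φ : K → X → ℂ) {k : Fin N → K}
    (hk : ¬ Function.Injective k) (y : Fin N → X) : BA φ k y = 0 := by
  rw [BA_eq_det]
  simp only [Function.Injective, not_forall] at hk
  obtain ⟨i, j, hij, hne⟩ := hk
  exact Matrix.det_zero_of_row_eq hne (by funext b; simp [hij])

lemma sign_cast_mul_self {N : ℕ} (σ : Equiv.Perm (Fin N)) :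
    ((Equiv.Perm.sign σ : ℤ) : ℂ) * ((Equiv.Perm.sign σ : ℤ) : ℂ) = 1 := by
  rw [← Int.cast_mul, ← Units.val_mul, Int.units_mul_self]; simp

lemma bethe_sum_all {S K : Type*} [Fintype S] [LinearOrder S] [Fintype K]
    (φ ψ : K → S → ℂ)
    (h : ∀ y y' : S, ∑ k : K, φ k y * star (ψ k y') = if y = y' then 1 else 0)
    (N : ℕ) (y y' : Fin N → S) (hy : StrictMono y) (hy' : StrictMono y') :
    ∑ k : Fin N → K, BA φ k y * star (BA ψ k y') =
      (N.factorial : ℂ) * (if y = y' then 1 else 0) := by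
  classical
  have step1 : ∑ k : Fin N → K, BA φ k y * star (BA ψ k y') =
      ∑ σ : Equiv.Perm (Fin N), ∑ τ : Equiv.Perm (Fin N),
        (((Equiv.Perm.sign σ : ℤ) : ℂ) * ((Equiv.Perm.sign τ : ℤ) : ℂ)) *
          (if ∀ b, y (σ⁻¹ b) = y' (τ⁻¹ b) then 1 else 0) := by
    have e1 : ∀ k : Fin N → K, BA φ k y * star (BA ψ k y') =
        ∑ σ : Equiv.Perm (Fin N), ∑ τ : Equiv.Perm (Fin N),
          (((Equiv.Perm.sign σ : ℤ) : ℂ) * ((Equiv.Perm.sign τ : ℤ) : ℂ)) *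
            ∏ b, (φ (k b) (y (σ⁻¹ b)) * star (ψ (k b) (y' (τ⁻¹ b)))) := by
      intro k
      rw [BA, BA, star_sum, Finset.sum_mul_sum]
      refine Finset.sum_congr rfl fun σ _ => Finset.sum_congr rfl fun τ _ => ?_
      rw [star_mul', star_prod]
      have hc : (star (((Equiv.Perm.sign τ : ℤ) : ℂ)) : ℂ) = ((Equiv.Perm.sign τ : ℤ) : ℂ) := by
        simp
      rw [hc]
      have h1 : ∏ a, φ (k (σ a)) (y a) = ∏ b, φ (k b) (y (σ⁻¹ b)) := by
        rw [← Equiv.prod_comp σ (fun b => φ (k b) (y (σ⁻¹ b)))]; simp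
      have h2 : ∏ a, star (ψ (k (τ a)) (y' a)) = ∏ b, star (ψ (k b) (y' (τ⁻¹ b))) := by
        rw [← Equiv.prod_comp τ (fun b => star (ψ (k b) (y' (τ⁻¹ b))))]; simp
      rw [h1, h2, Finset.prod_mul_distrib]
      ring
    rw [Finset.sum_congr rfl fun k _ => e1 k]
    rw [Finset.sum_comm]
    refine Finset.sum_congr rfl fun σ _ => ?_
    rw [Finset.sum_comm]
    refine Finset.sum_congr rfl fun τ _ => ?_
    rw [← Finset.mul_sum]
    congr 1
    have hpu : ∑ k : Fin N → K, ∏ b, (φ (k b) (y (σ⁻¹ b)) * star (ψ (k b) (y' (τ⁻¹ b)))) =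
        ∏ b, ∑ κ : K, (φ κ (y (σ⁻¹ b)) * star (ψ κ (y' (τ⁻¹ b)))) := by
      rw [Finset.prod_univ_sum, Fintype.piFinset_univ]
    rw [hpu]
    have : ∀ b, (∑ κ : K, (φ κ (y (σ⁻¹ b)) * star (ψ κ (y' (τ⁻¹ b))))) =
        if y (σ⁻¹ b) = y' (τ⁻¹ b) then 1 else 0 := fun b => h _ _
    rw [Finset.prod_congr rfl fun b _ => this b, Fintype.prod_boole]
    by_cases hc : ∀ b, y (σ⁻¹ b) = y' (τ⁻¹ b)
    · simp [hc]
    · simp [hc]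
  rw [step1]
  by_cases hyy : y = y'
  · subst hyy
    simp only [if_pos rfl]
    have hcond : ∀ σ τ : Equiv.Perm (Fin N), (∀ b, y (σ⁻¹ b) = y (τ⁻¹ b)) ↔ τ = σ := by
      intro σ τ
      constructor
      · intro hb
        have : σ⁻¹ = τ⁻¹ := Equiv.ext fun b => hy.injective (hb b)
        exact (inv_injective this).symm
      · rintro rfl; intro b; rfl
    have : ∀ σ : Equiv.Perm (Fin N), ∑ τ : Equiv.Perm (Fin N),
        (((Equiv.Perm.sign σ : ℤ) : ℂ) * ((Equiv.Perm.sign τ : ℤ) : ℂ)) *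
          (if ∀ b, y (σ⁻¹ b) = y (τ⁻¹ b) then 1 else 0) = 1 := by
      intro σ
      have e : ∀ τ : Equiv.Perm (Fin N),
          (((Equiv.Perm.sign σ : ℤ) : ℂ) * ((Equiv.Perm.sign τ : ℤ) : ℂ)) *
            (if ∀ b, y (σ⁻¹ b) = y (τ⁻¹ b) then 1 else 0) =
          if τ = σ then (((Equiv.Perm.sign σ : ℤ) : ℂ) * ((Equiv.Perm.sign τ : ℤ) : ℂ))
            else 0 := by
        intro τ
        rw [if_congr (hcond σ τ) rfl rfl, mul_ite, mul_one, mul_zero]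
      rw [Finset.sum_congr rfl fun τ _ => e τ, Finset.sum_ite_eq' Finset.univ σ]
      simp [sign_cast_mul_self σ]
    rw [Finset.sum_congr rfl fun σ _ => this σ]
    simp [Finset.card_univ, Fintype.card_perm, Fintype.card_fin]
  · rw [if_neg hyy, mul_zero]
    apply Finset.sum_eq_zero
    intro σ _
    apply Finset.sum_eq_zero
    intro τ _
    rw [if_neg, mul_zero]
    intro hb
    apply hyy
    have hcomp : y = y' ∘ (σ.trans τ⁻¹) := by
      funext a
      have := hb (σ a)
      simpa using this
    have hm1 : Monotone (y' ∘ (σ.trans τ⁻¹ : Equiv.Perm (Fin N))) := by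
      rw [← hcomp]; exact hy.monotone
    have hm2 : Monotone (y' ∘ (Equiv.refl (Fin N) : Equiv.Perm (Fin N))) := by
      simpa using hy'.monotone
    have := Tuple.unique_monotone hm1 hm2
    rw [hcomp, this]
    funext a; simp

end BetheAux

/-- completeness of Bethe Ansatz vectors. -/
theorem bethe_completeness (S K : Type*) [Fintype S] [LinearOrder S]
    [Fintype K] [LinearOrder K] (φ ψ : K → S → ℂ)
    (h : ∀ y y' : S, ∑ k : K, φ k y * star (ψ k y') = if y = y' then 1 else 0)
    (N : ℕ) (y y' : Fin N → S)
    (hy : y ∈ UU (Finset.univ : Finset S) N) (hy' : y' ∈ UU (Finset.univ : Finset S) N) :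
    ∑ k ∈ UU (Finset.univ : Finset K) N, BA φ k y * star (BA ψ k y') =
      if y = y' then 1 else 0 := by
  classical
  have hyS : StrictMono y := by
    have := (Finset.mem_filter.1 hy).2
    intro i j hij; exact this i j hij
  have hy'S : StrictMono y' := by
    have := (Finset.mem_filter.1 hy').2
    intro i j hij; exact this i j hij
  have hfac : (N.factorial : ℂ) ≠ 0 := Nat.cast_ne_zero.2 N.factorial_ne_zero
  apply mul_left_cancel₀ hfac
  rw [← bethe_sum_all φ ψ h N y y' hyS hy'S]
  have hzero : ∀ k : Fin N → K, ¬ Function.Injective k →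
      BA φ k y * star (BA ψ k y') = 0 := by
    intro k hk
    rw [BA_eq_zero φ hk y, zero_mul]
  have h1 : ∑ k : Fin N → K, BA φ k y * star (BA ψ k y') =
      ∑ k ∈ Finset.univ.filter (fun k : Fin N → K => Function.Injective k),
        BA φ k y * star (BA ψ k y') := by
    symm
    apply Finset.sum_filter_of_ne
    intro k _ hk
    by_contra hinj
    exact hk (hzero k hinj)
  have h2 : ∑ k ∈ Finset.univ.filter (fun k : Fin N → K => Function.Injective k),
        BA φ k y * star (BA ψ k y') =
      ∑ p ∈ (UU (Finset.univ : Finset K) N) ×ˢ (Finset.univ : Finset (Equiv.Perm (Fin N))),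
        BA φ (p.1 ∘ ⇑p.2) y * star (BA ψ (p.1 ∘ ⇑p.2) y') := by
    symm
    refine Finset.sum_nbij' (i := fun p : (Fin N → K) × Equiv.Perm (Fin N) => p.1 ∘ ⇑p.2)
      (j := fun k => (k ∘ ⇑(Tuple.sort k), (Tuple.sort k)⁻¹)) ?_ ?_ ?_ ?_ ?_
    · rintro ⟨g, σ⟩ hp
      rw [Finset.mem_product] at hp
      have hg : StrictMono g := by
        have := (Finset.mem_filter.1 hp.1).2
        intro i j hij; exact this i j hij
      simp only [Finset.mem_filter, Finset.mem_univ, true_and]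
      exact hg.injective.comp σ.injective
    · intro k hk
      rw [Finset.mem_filter] at hk
      have hkinj : Function.Injective k := hk.2
      rw [Finset.mem_product]
      constructor
      · rw [UU, Finset.mem_filter]
        refine ⟨by simp [Fintype.mem_piFinset], ?_⟩
        have hmono := Tuple.monotone_sort k
        have hinj : Function.Injective (k ∘ ⇑(Tuple.sort k)) :=
          hkinj.comp (Tuple.sort k).injective
        have := hmono.strictMono_of_injective hinj
        intro i j hij; exact this hij
      · exact Finset.mem_univ _
    · rintro ⟨g, σ⟩ hp
      rw [Finset.mem_product] at hp
      have hg : StrictMono g := by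
        have := (Finset.mem_filter.1 hp.1).2
        intro i j hij; exact this i j hij
      have hinj : Function.Injective (g ∘ ⇑σ) := hg.injective.comp σ.injective
      have hgs : (g ∘ ⇑σ) ∘ ⇑σ⁻¹ = g := by
        funext a; simp
      have hmono : Monotone ((g ∘ ⇑σ) ∘ ⇑σ⁻¹) := by rw [hgs]; exact hg.monotone
      have hsorteq : (g ∘ ⇑σ) ∘ ⇑σ⁻¹ = (g ∘ ⇑σ) ∘ ⇑(Tuple.sort (g ∘ ⇑σ)) :=
        Tuple.comp_sort_eq_comp_iff_monotone.2 hmono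
      have hperm : σ⁻¹ = Tuple.sort (g ∘ ⇑σ) := by
        apply Equiv.ext
        intro a
        apply hinj
        exact congrFun hsorteq a
      have c1 : (g ∘ ⇑σ) ∘ ⇑(Tuple.sort (g ∘ ⇑σ)) = g := by
        rw [← hperm]; exact hgs
      have c2 : (Tuple.sort (g ∘ ⇑σ))⁻¹ = σ := by rw [← hperm]; simp
      exact Prod.ext c1 c2
    · intro k _
      funext a; simp
    · intro p _
      rfl
  have h3 : ∑ p ∈ (UU (Finset.univ : Finset K) N) ×ˢ
        (Finset.univ : Finset (Equiv.Perm (Fin N))),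
        BA φ (p.1 ∘ ⇑p.2) y * star (BA ψ (p.1 ∘ ⇑p.2) y') =
      (N.factorial : ℂ) * ∑ k ∈ UU (Finset.univ : Finset K) N,
        BA φ k y * star (BA ψ k y') := by
    rw [Finset.sum_product]
    have e : ∀ g : Fin N → K, ∀ σ : Equiv.Perm (Fin N),
        BA φ (g ∘ ⇑σ) y * star (BA ψ (g ∘ ⇑σ) y') = BA φ g y * star (BA ψ g y') := by
      intro g σ
      rw [BA_comp_perm, BA_comp_perm, star_mul']
      have hc : (star (((Equiv.Perm.sign σ : ℤ) : ℂ)) : ℂ) =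
          ((Equiv.Perm.sign σ : ℤ) : ℂ) := by simp
      rw [hc, mul_mul_mul_comm, sign_cast_mul_self, one_mul]
    rw [Finset.sum_congr rfl fun g _ => Finset.sum_congr rfl fun σ _ => e g σ]
    simp only [Finset.sum_const, Finset.card_univ, Fintype.card_perm, Fintype.card_fin,
      nsmul_eq_mul]
    rw [← Finset.mul_sum]
  rw [h1, h2, h3]
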